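/- arXiv:0806.3073 — 6 statements merged into one kernel-verified Lean document; each statement's English description precedes it below -/
import Mathlib

section
/- Let G be a connected graph of bounded degree and p > 1. The space BD_p(G) of bounded p-Dirichlet-finite functions, equipped with the norm ‖f‖ = (I_p(f,V))^{1/p} + sup_V |f|, is a commutative Banach algebra under pointwise multiplication: ‖fh‖ ≤ ‖f‖·‖h‖ for all f,h ∈ BD_p(G). -/
open scoped ENNReal Classical

variable {V : Type*}

/-- A graph has degree bounded by `k`. -/
def BoundedDegree (G : SimpleGraph V) (k : ℕ) : Prop :=
  ∀ x : V, (G.neighborSet x).Finite ∧ (G.neighborSet x).ncard ≤ k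

/-- A bounded real-valued function on the vertex set. -/
def BddFun (f : V → ℝ) : Prop := ∃ M : ℝ, ∀ x, |f x| ≤ M

/-- The `p`-Dirichlet sum `I_p(f,V) = Σ_x Σ_{y ∈ N_x} |f(y)-f(x)|^p`. -/
noncomputable def Ip (G : SimpleGraph V) (p : ℝ) (f : V → ℝ) : ℝ≥0∞ :=
  ∑' x : V, ∑' y : V, if G.Adj x y then ENNReal.ofReal (|f y - f x| ^ p) else 0

/-- Membership in `BD_p(G)`: bounded with finite `p`-Dirichlet sum. -/
def MemBDp (G : SimpleGraph V) (p : ℝ) (f : V → ℝ) : Prop :=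
  BddFun f ∧ Ip G p f ≠ ⊤

/-- The `BD_p` norm `(I_p(f,V))^{1/p} + sup_V |f|`. -/
noncomputable def BDpNorm (G : SimpleGraph V) (p : ℝ) (f : V → ℝ) : ℝ :=
  (Ip G p f).toReal ^ (1/p) + ⨆ x, |f x|

/-- The `p`-th power of the `D_p`-distance from `f` to `0` (with base vertex `o`):
`I_p(f,V) + |f(o)|^p`, valued in `ℝ≥0∞`. -/
noncomputable def DpDist (G : SimpleGraph V) (p : ℝ) (o : V) (f : V → ℝ) : ℝ≥0∞ :=
  Ip G p f + ENNReal.ofReal (|f o| ^ p)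

/-- `f` is bounded and lies in the `D_p`-closure of the finitely supported functions:
the space `B(\overline{ℝG})_{D_p}`. -/
def BRClos (G : SimpleGraph V) (p : ℝ) (o : V) (f : V → ℝ) : Prop :=
  BddFun f ∧ ∀ ε : ℝ, 0 < ε → ∃ u : V → ℝ,
    (Function.support u).Finite ∧ DpDist G p o (fun x => f x - u x) < ENNReal.ofReal ε

/-- The `p`-Laplacian `Δ_p h (x) = Σ_{y ∈ N_x} |h(y)-h(x)|^{p-2}(h(y)-h(x))`. -/
noncomputable def pLap (G : SimpleGraph V) (p : ℝ) (h : V → ℝ) (x : V) : ℝ :=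
  ∑' y : V, if G.Adj x y then |h y - h x| ^ (p-2) * (h y - h x) else 0

/-- `h` is `p`-harmonic on all of `V`. -/
def PHarmonic (G : SimpleGraph V) (p : ℝ) (h : V → ℝ) : Prop :=
  ∀ x, pLap G p h x = 0

/-- The pairing `⟨Δ_p h, f⟩ = Σ_x Σ_{y ∈ N_x} |h(y)-h(x)|^{p-2}(h(y)-h(x))(f(y)-f(x))`. -/
noncomputable def pPair (G : SimpleGraph V) (p : ℝ) (h f : V → ℝ) : ℝ :=
  ∑' x : V, ∑' y : V,
    if G.Adj x y then |h y - h x| ^ (p-2) * (h y - h x) * (f y - f x) else 0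

/-! The product rule `f(y)h(y) - f(x)h(x) = f(y)(h(y) - h(x)) + h(x)(f(y) - f(x))` bounds each
edge difference of `fh` by `sup|f|·|h(y) - h(x)| + sup|h|·|f(y) - f(x)|`. Minkowski's inequality
in `ℓ^p(V × V)` then gives `I_p(fh)^{1/p} ≤ sup|f|·I_p(h)^{1/p} + sup|h|·I_p(f)^{1/p}`, and
together with `sup|fh| ≤ sup|f|·sup|h|` this is dominated by the expansion of `‖f‖·‖h‖`. -/

open MeasureTheory in
theorem ENNReal.Lp_add_le_tsum {ι : Type*} (f g : ι → ℝ≥0∞) {p : ℝ} (hp : 1 ≤ p) :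
    (∑' i, (f i + g i) ^ p) ^ (1 / p)
      ≤ (∑' i, f i ^ p) ^ (1 / p) + (∑' i, g i ^ p) ^ (1 / p) := by
  let _ : MeasurableSpace ι := ⊤
  have : MeasurableSingletonClass ι := ⟨fun _ => MeasurableSpace.measurableSet_top⟩
  simpa [lintegral_count] using
    ENNReal.lintegral_Lp_add_le (μ := Measure.count) (f := f) (g := g)
      measurable_from_top.aemeasurable measurable_from_top.aemeasurable hp

theorem ENNReal.tsum_const_mul_rpow_rpow_one_div {ι : Type*} (c : ℝ≥0∞) (f : ι → ℝ≥0∞) {p : ℝ}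
    (hp : 0 < p) : (∑' i, (c * f i) ^ p) ^ (1 / p) = c * (∑' i, f i ^ p) ^ (1 / p) := by
  simp_rw [ENNReal.mul_rpow_of_nonneg _ _ hp.le, ENNReal.tsum_mul_left]
  rw [ENNReal.mul_rpow_of_nonneg _ _ (by positivity), ← ENNReal.rpow_mul,
    mul_one_div_cancel hp.ne', ENNReal.rpow_one]

theorem abs_mul_sub_mul_le {R : Type*} [CommRing R] [LinearOrder R] [IsStrictOrderedRing R]
    (a b c d : R) : |a * b - c * d| ≤ |a| * |b - d| + |d| * |a - c| := by
  calc |a * b - c * d| = |a * (b - d) + d * (a - c)| := by ring_nf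
    _ ≤ |a| * |b - d| + |d| * |a - c| := by
      simpa only [abs_mul] using abs_add_le (a * (b - d)) (d * (a - c))

noncomputable def edgeDiff (G : SimpleGraph V) (f : V → ℝ) (z : V × V) : ℝ≥0∞ :=
  if G.Adj z.1 z.2 then ENNReal.ofReal |f z.2 - f z.1| else 0

theorem Ip_eq_tsum_edgeDiff_rpow (G : SimpleGraph V) {p : ℝ} (hp : 0 < p) (f : V → ℝ) :
    Ip G p f = ∑' z, edgeDiff G f z ^ p := by
  rw [Ip, ← ENNReal.tsum_prod]
  refine tsum_congr fun z => ?_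
  by_cases hz : G.Adj z.1 z.2
  · simp [edgeDiff, hz, ENNReal.ofReal_rpow_of_nonneg (abs_nonneg _) hp.le]
  · simp [edgeDiff, hz, ENNReal.zero_rpow_of_pos hp]

theorem edgeDiff_mul_le (G : SimpleGraph V) {f h : V → ℝ} {Mf Mh : ℝ}
    (hf : ∀ x, |f x| ≤ Mf) (hh : ∀ x, |h x| ≤ Mh) (z : V × V) :
    edgeDiff G (fun x => f x * h x) z
      ≤ ENNReal.ofReal Mf * edgeDiff G h z + ENNReal.ofReal Mh * edgeDiff G f z := by
  by_cases hz : G.Adj z.1 z.2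
  · have hMf : 0 ≤ Mf := (abs_nonneg _).trans (hf z.1)
    have hMh : 0 ≤ Mh := (abs_nonneg _).trans (hh z.1)
    simp only [edgeDiff, hz, if_true]
    rw [← ENNReal.ofReal_mul hMf, ← ENNReal.ofReal_mul hMh,
      ← ENNReal.ofReal_add (by positivity) (by positivity)]
    refine ENNReal.ofReal_le_ofReal ((abs_mul_sub_mul_le _ _ _ _).trans ?_)
    gcongr
    exacts [hf _, hh _]
  · simp [edgeDiff, hz]

theorem Ip_mul_rpow_le (G : SimpleGraph V) {p : ℝ} (hp : 1 ≤ p) {f h : V → ℝ} {Mf Mh : ℝ}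
    (hf : ∀ x, |f x| ≤ Mf) (hh : ∀ x, |h x| ≤ Mh) :
    Ip G p (fun x => f x * h x) ^ (1 / p)
      ≤ ENNReal.ofReal Mf * Ip G p h ^ (1 / p) + ENNReal.ofReal Mh * Ip G p f ^ (1 / p) := by
  have hp0 : 0 < p := zero_lt_one.trans_le hp
  simp only [Ip_eq_tsum_edgeDiff_rpow G hp0]
  calc (∑' z, edgeDiff G (fun x => f x * h x) z ^ p) ^ (1 / p)
      ≤ (∑' z, (ENNReal.ofReal Mf * edgeDiff G h z + ENNReal.ofReal Mh * edgeDiff G f z) ^ p)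
          ^ (1 / p) := by
        gcongr with z
        exact edgeDiff_mul_le G hf hh z
    _ ≤ _ := by
        rw [← ENNReal.tsum_const_mul_rpow_rpow_one_div _ _ hp0,
          ← ENNReal.tsum_const_mul_rpow_rpow_one_div _ _ hp0]
        exact ENNReal.Lp_add_le_tsum _ _ hp

theorem Ip_mul_ne_top (G : SimpleGraph V) {p : ℝ} (hp : 1 ≤ p) {f h : V → ℝ} {Mf Mh : ℝ}
    (hf : ∀ x, |f x| ≤ Mf) (hh : ∀ x, |h x| ≤ Mh) (hIf : Ip G p f ≠ ⊤) (hIh : Ip G p h ≠ ⊤) :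
    Ip G p (fun x => f x * h x) ≠ ⊤ := by
  have hp0 : 0 < 1 / p := one_div_pos.2 (zero_lt_one.trans_le hp)
  refine (ENNReal.rpow_eq_top_iff_of_pos hp0).not.1
    (ne_top_of_le_ne_top ?_ (Ip_mul_rpow_le G hp hf hh))
  finiteness

theorem toReal_Ip_mul_rpow_le (G : SimpleGraph V) {p : ℝ} (hp : 1 ≤ p) {f h : V → ℝ}
    {Mf Mh : ℝ} (hMf : 0 ≤ Mf) (hMh : 0 ≤ Mh) (hf : ∀ x, |f x| ≤ Mf) (hh : ∀ x, |h x| ≤ Mh)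
    (hIf : Ip G p f ≠ ⊤) (hIh : Ip G p h ≠ ⊤) :
    (Ip G p (fun x => f x * h x)).toReal ^ (1 / p)
      ≤ Mf * (Ip G p h).toReal ^ (1 / p) + Mh * (Ip G p f).toReal ^ (1 / p) := by
  have := ENNReal.toReal_mono (by finiteness) (Ip_mul_rpow_le G hp hf hh)
  rwa [ENNReal.toReal_add (by finiteness) (by finiteness), ENNReal.toReal_mul,
    ENNReal.toReal_mul, ENNReal.toReal_ofReal hMf, ENNReal.toReal_ofReal hMh,
    ← ENNReal.toReal_rpow, ← ENNReal.toReal_rpow, ← ENNReal.toReal_rpow] at this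

theorem BddFun.abs_le_iSup {f : V → ℝ} (hf : BddFun f) (x : V) : |f x| ≤ ⨆ x, |f x| := by
  obtain ⟨M, hM⟩ := hf
  exact le_ciSup ⟨M, Set.forall_mem_range.2 hM⟩ x

theorem iSup_abs_nonneg (f : V → ℝ) : 0 ≤ ⨆ x, |f x| :=
  Real.iSup_nonneg fun x => abs_nonneg (f x)

theorem BddFun.abs_mul_le_iSup_mul_iSup {f h : V → ℝ} (hf : BddFun f) (hh : BddFun h) (x : V) :
    |f x * h x| ≤ (⨆ x, |f x|) * ⨆ x, |h x| := by
  rw [abs_mul]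
  exact mul_le_mul (hf.abs_le_iSup x) (hh.abs_le_iSup x) (abs_nonneg _) (iSup_abs_nonneg f)

theorem BddFun.mul {f h : V → ℝ} (hf : BddFun f) (hh : BddFun h) : BddFun (fun x => f x * h x) :=
  ⟨_, hf.abs_mul_le_iSup_mul_iSup hh⟩

theorem BddFun.iSup_abs_mul_le {f h : V → ℝ} (hf : BddFun f) (hh : BddFun h) :
    ⨆ x, |f x * h x| ≤ (⨆ x, |f x|) * ⨆ x, |h x| :=
  Real.iSup_le (hf.abs_mul_le_iSup_mul_iSup hh)
    (mul_nonneg (iSup_abs_nonneg f) (iSup_abs_nonneg h))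

theorem stmt1_general (G : SimpleGraph V) (p : ℝ) (hp : 1 < p)
    (f h : V → ℝ) (hf : MemBDp G p f) (hh : MemBDp G p h) :
    MemBDp G p (fun x => f x * h x) ∧
    BDpNorm G p (fun x => f x * h x) ≤ BDpNorm G p f * BDpNorm G p h := by
  obtain ⟨hfb, hIf⟩ := hf
  obtain ⟨hhb, hIh⟩ := hh
  refine ⟨⟨hfb.mul hhb, Ip_mul_ne_top G hp.le hfb.abs_le_iSup hhb.abs_le_iSup hIf hIh⟩, ?_⟩
  have hDir := toReal_Ip_mul_rpow_le G hp.le (iSup_abs_nonneg f) (iSup_abs_nonneg h)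
    hfb.abs_le_iSup hhb.abs_le_iSup hIf hIh
  have hsup := hfb.iSup_abs_mul_le hhb
  have hDf : 0 ≤ (Ip G p f).toReal ^ (1 / p) := by positivity
  have hDh : 0 ≤ (Ip G p h).toReal ^ (1 / p) := by positivity
  have hMf := iSup_abs_nonneg f
  have hMh := iSup_abs_nonneg h
  rw [BDpNorm, BDpNorm, BDpNorm]
  nlinarith [mul_nonneg hDf hDh]

theorem stmt1 [Countable V] [Infinite V] (G : SimpleGraph V) (k : ℕ)
    (hG : G.Connected) (hk : BoundedDegree G k) (p : ℝ) (hp : 1 < p)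
    (f h : V → ℝ) (hf : MemBDp G p f) (hh : MemBDp G p h) :
    MemBDp G p (fun x => f x * h x) ∧
    BDpNorm G p (fun x => f x * h x) ≤ BDpNorm G p f * BDpNorm G p h :=
  stmt1_general G p hp f h hf hh
end

section
/- Let G be a connected graph of bounded degree, p > 1, and let f₁, f₂ ∈ D_p(G). Then ⟨Δ_p f₁ − Δ_p f₂, f₁ − f₂⟩ = 0 if and only if f₁ − f₂ is constant on V, where ⟨Δ_p h, f⟩ = Σ_{x∈V} Σ_{y∈N_x} |h(y)−h(x)|^{p−2}(h(y)−h(x))(f(y)−f(x)). -/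
open scoped ENNReal Classical

variable {V : Type*}

/-! Write `φ_p(s) = |s|^{p-2} s` and `Δf` for the difference of `f` along an oriented edge.
The pairing difference is `Σ (φ_p(Δf₁) - φ_p(Δf₂)) (Δf₁ - Δf₂)` over oriented edges, and all
sums converge absolutely because `|φ_p(a) b| ≤ |a|^p + |b|^p` and `D_p` is a vector space.
Since `φ_p` is strictly increasing for `p > 1`, every term is nonnegative and vanishes only
when `Δ(f₁ - f₂) = 0`. So the pairing vanishes iff `f₁ - f₂` is constant along edges, which on
a connected graph means constant. -/

noncomputable def pPhi (p s : ℝ) : ℝ := |s| ^ (p - 2) * s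

lemma pPhi_neg (p s : ℝ) : pPhi p (-s) = -pPhi p s := by
  simp [pPhi]

lemma pPhi_of_nonneg {p s : ℝ} (hp : p ≠ 1) (hs : 0 ≤ s) : pPhi p s = s ^ (p - 1) := by
  rcases hs.eq_or_lt with rfl | hs
  · simp [pPhi, Real.zero_rpow (sub_ne_zero.mpr hp)]
  · rw [pPhi, abs_of_pos hs, ← Real.rpow_add_one hs.ne']
    ring_nf

lemma abs_pPhi {p : ℝ} (hp : p ≠ 1) (s : ℝ) : |pPhi p s| = |s| ^ (p - 1) := by
  rw [← pPhi_of_nonneg hp (abs_nonneg s), pPhi, pPhi, abs_mul, abs_abs,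
    abs_of_nonneg (Real.rpow_nonneg (abs_nonneg s) _)]

lemma strictMono_pPhi {p : ℝ} (hp : 1 < p) : StrictMono (pPhi p) := by
  refine strictMono_of_odd_strictMonoOn_nonneg (pPhi_neg p) fun s hs t ht hst => ?_
  rw [pPhi_of_nonneg hp.ne' hs, pPhi_of_nonneg hp.ne' ht]
  exact Real.rpow_lt_rpow hs hst (by linarith)

lemma pPhi_sub_mul_sub_nonneg {p : ℝ} (hp : 1 < p) (s t : ℝ) :
    0 ≤ (pPhi p s - pPhi p t) * (s - t) :=
  ((strictMono_pPhi hp).monotone.monovary monotone_id).sub_mul_sub_nonneg t s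

lemma eq_of_pPhi_sub_mul_sub_eq_zero {p s t : ℝ} (hp : 1 < p)
    (h : (pPhi p s - pPhi p t) * (s - t) = 0) : s = t := by
  rcases mul_eq_zero.mp h with h | h
  · exact (strictMono_pPhi hp).injective (sub_eq_zero.mp h)
  · exact sub_eq_zero.mp h

lemma rpow_sub_one_mul_le_rpow_add_rpow {p a b : ℝ} (hp : 1 ≤ p) (ha : 0 ≤ a) (hb : 0 ≤ b) :
    a ^ (p - 1) * b ≤ a ^ p + b ^ p := by
  have hm : 0 ≤ max a b := ha.trans (le_max_left a b)
  calc a ^ (p - 1) * b ≤ max a b ^ (p - 1) * max a b := by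
        gcongr
        · exact le_max_left a b
        · exact le_max_right a b
    _ = max a b ^ p := by
        rw [← Real.rpow_add_one' hm (by linarith), sub_add_cancel]
    _ ≤ a ^ p + b ^ p := by
        rcases max_cases a b with ⟨h, _⟩ | ⟨h, _⟩ <;> rw [h]
        · exact le_add_of_nonneg_right (Real.rpow_nonneg hb p)
        · exact le_add_of_nonneg_left (Real.rpow_nonneg ha p)

lemma abs_sub_rpow_le {p : ℝ} (hp : 1 ≤ p) (s t : ℝ) :
    |s - t| ^ p ≤ 2 ^ (p - 1) * (|s| ^ p + |t| ^ p) := by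
  calc |s - t| ^ p ≤ (|s| + |t|) ^ p :=
        Real.rpow_le_rpow (abs_nonneg _) (abs_sub s t) (by linarith)
    _ ≤ 2 ^ (p - 1) * (|s| ^ p + |t| ^ p) := by
        have := NNReal.rpow_add_le_mul_rpow_add_rpow ⟨|s|, abs_nonneg s⟩ ⟨|t|, abs_nonneg t⟩ hp
        exact_mod_cast this

lemma SimpleGraph.Reachable.apply_eq_of_forall_adj {β : Type*} {G : SimpleGraph V} {g : V → β}
    (hg : ∀ x y, G.Adj x y → g x = g y) {u v : V} (huv : G.Reachable u v) : g u = g v := by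
  obtain ⟨w⟩ := huv
  induction w with
  | nil => rfl
  | cons h _ ih => exact (hg _ _ h).trans ih

noncomputable def ipTerm (G : SimpleGraph V) (p : ℝ) (f : V → ℝ) (z : V × V) : ℝ :=
  if G.Adj z.1 z.2 then |f z.2 - f z.1| ^ p else 0

noncomputable def pPairTerm (G : SimpleGraph V) (p : ℝ) (h f : V → ℝ) (z : V × V) : ℝ :=
  if G.Adj z.1 z.2 then pPhi p (h z.2 - h z.1) * (f z.2 - f z.1) else 0

section Summands

variable {G : SimpleGraph V} {p : ℝ}

lemma ipTerm_nonneg (f : V → ℝ) (z : V × V) : 0 ≤ ipTerm G p f z := by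
  unfold ipTerm
  split
  · exact Real.rpow_nonneg (abs_nonneg _) p
  · rfl

lemma summable_ipTerm {f : V → ℝ} (hf : Ip G p f ≠ ⊤) : Summable (ipTerm G p f) := by
  have hprod : Ip G p f = ∑' z : V × V, ENNReal.ofReal (ipTerm G p f z) := by
    rw [Ip, ← ENNReal.tsum_prod]
    exact tsum_congr fun z => by unfold ipTerm; split <;> simp
  rw [hprod] at hf
  simpa [ENNReal.toReal_ofReal (ipTerm_nonneg f _)] using ENNReal.summable_toReal hf

lemma summable_ipTerm_sub (hp : 1 ≤ p) {f₁ f₂ : V → ℝ} (hf₁ : Summable (ipTerm G p f₁))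
    (hf₂ : Summable (ipTerm G p f₂)) : Summable (ipTerm G p (fun x => f₁ x - f₂ x)) := by
  refine .of_nonneg_of_le (ipTerm_nonneg _) (fun z => ?_) ((hf₁.add hf₂).mul_left (2 ^ (p - 1)))
  unfold ipTerm
  split
  · rw [sub_sub_sub_comm]
    exact abs_sub_rpow_le hp _ _
  · simp

lemma summable_pPairTerm (hp : 1 < p) {h f : V → ℝ} (hh : Summable (ipTerm G p h))
    (hf : Summable (ipTerm G p f)) : Summable (pPairTerm G p h f) := by
  refine .of_norm_bounded (hh.add hf) fun z => ?_
  unfold pPairTerm ipTerm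
  split
  · rw [Real.norm_eq_abs, abs_mul, abs_pPhi hp.ne']
    exact rpow_sub_one_mul_le_rpow_add_rpow hp.le (abs_nonneg _) (abs_nonneg _)
  · simp

lemma pPair_eq_tsum_pPairTerm {h f : V → ℝ} (hs : Summable (pPairTerm G p h f)) :
    pPair G p h f = ∑' z, pPairTerm G p h f z := by
  rw [pPair, hs.tsum_prod' hs.prod_factor]
  rfl

lemma pPairTerm_sub_pPairTerm (f₁ f₂ : V → ℝ) (z : V × V) :
    pPairTerm G p f₁ (fun x => f₁ x - f₂ x) z - pPairTerm G p f₂ (fun x => f₁ x - f₂ x) z =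
      if G.Adj z.1 z.2 then
        (pPhi p (f₁ z.2 - f₁ z.1) - pPhi p (f₂ z.2 - f₂ z.1)) *
          ((f₁ z.2 - f₁ z.1) - (f₂ z.2 - f₂ z.1))
      else 0 := by
  unfold pPairTerm
  split
  · ring
  · simp

lemma pPairTerm_sub_pPairTerm_nonneg (hp : 1 < p) (f₁ f₂ : V → ℝ) (z : V × V) :
    0 ≤ pPairTerm G p f₁ (fun x => f₁ x - f₂ x) z - pPairTerm G p f₂ (fun x => f₁ x - f₂ x) z := by
  rw [pPairTerm_sub_pPairTerm]
  split
  · exact pPhi_sub_mul_sub_nonneg hp _ _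
  · rfl

end Summands

theorem stmt3_general (G : SimpleGraph V)
    (hG : G.Connected) (p : ℝ) (hp : 1 < p)
    (f₁ f₂ : V → ℝ) (hf₁ : Ip G p f₁ ≠ ⊤) (hf₂ : Ip G p f₂ ≠ ⊤) :
    pPair G p f₁ (fun x => f₁ x - f₂ x) - pPair G p f₂ (fun x => f₁ x - f₂ x) = 0 ↔
      ∃ c : ℝ, ∀ x, f₁ x - f₂ x = c := by
  have hs₁ := summable_ipTerm hf₁
  have hs₂ := summable_ipTerm hf₂
  have hs := summable_ipTerm_sub hp.le hs₁ hs₂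
  have hT₁ := summable_pPairTerm hp hs₁ hs
  have hT₂ := summable_pPairTerm hp hs₂ hs
  rw [pPair_eq_tsum_pPairTerm hT₁, pPair_eq_tsum_pPairTerm hT₂, ← hT₁.tsum_sub hT₂]
  constructor
  · intro h0
    have hzero := (hasSum_zero_iff_of_nonneg (pPairTerm_sub_pPairTerm_nonneg hp f₁ f₂)).mp
      (h0 ▸ (hT₁.sub hT₂).hasSum)
    have hadj : ∀ x y, G.Adj x y → f₁ x - f₂ x = f₁ y - f₂ y := fun x y hxy => by
      have h := congrFun hzero (x, y)
      rw [pPairTerm_sub_pPairTerm, if_pos hxy] at h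
      linarith [eq_of_pPhi_sub_mul_sub_eq_zero hp h]
    obtain ⟨x₀⟩ := hG.nonempty
    exact ⟨f₁ x₀ - f₂ x₀, fun x => (hG.preconnected x x₀).apply_eq_of_forall_adj hadj⟩
  · rintro ⟨c, hc⟩
    simp [pPairTerm, hc]

theorem stmt3 [Countable V] [Infinite V] (G : SimpleGraph V) (k : ℕ)
    (hG : G.Connected) (hk : BoundedDegree G k) (p : ℝ) (hp : 1 < p)
    (f₁ f₂ : V → ℝ) (hf₁ : Ip G p f₁ ≠ ⊤) (hf₂ : Ip G p f₂ ≠ ⊤) :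
    pPair G p f₁ (fun x => f₁ x - f₂ x) - pPair G p f₂ (fun x => f₁ x - f₂ x) = 0 ↔
      ∃ c : ℝ, ∀ x, f₁ x - f₂ x = c :=
  stmt3_general G hG p hp f₁ f₂ hf₁ hf₂
end

section
/- Let G be a connected graph of bounded degree and p > 1. If h ∈ BD_p(G) is p-harmonic on all of V and f lies in the D_p-closure of the finitely supported functions (intersected with the bounded functions), then ⟨Δ_p h, f⟩ = 0. -/
open scoped ENNReal Classical

variable {V : Type*}

/-!
Write `a(x,y) = |h(y)-h(x)|^{p-2}(h(y)-h(x))` on edges (`pFlow`), so that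
`⟨Δ_p h, w⟩ = Σ a(x,y)(w(y)-w(x))`. Since `a` is antisymmetric and `Σ_y a(x,y) = Δ_p h(x) = 0`,
the pairing vanishes on finitely supported `u`. Hence `⟨Δ_p h, f⟩ = ⟨Δ_p h, f - u⟩`, and Hölder
with exponents `p` and `q = p/(p-1)` bounds this by `I_p(f-u)^{1/p} I_p(h)^{1/q}`, which can be
made arbitrarily small.
-/

open Filter Topology

noncomputable def pFlow (G : SimpleGraph V) (p : ℝ) (h : V → ℝ) (x y : V) : ℝ :=
  if G.Adj x y then |h y - h x| ^ (p - 2) * (h y - h x) else 0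

noncomputable def edgeEnergy (G : SimpleGraph V) (p : ℝ) (f : V → ℝ) (z : V × V) : ℝ :=
  if G.Adj z.1 z.2 then |f z.2 - f z.1| ^ p else 0

section

variable {G : SimpleGraph V} {p q : ℝ} {h : V → ℝ}

lemma pFlow_swap (x y : V) : pFlow G p h y x = -pFlow G p h x y := by
  by_cases hxy : G.Adj x y
  · simp only [pFlow, if_pos hxy, if_pos hxy.symm, abs_sub_comm (h x)]
    ring
  · simp [pFlow, hxy, mt G.adj_symm hxy]

lemma pLap_eq_tsum_pFlow (x : V) : pLap G p h x = ∑' y, pFlow G p h x y := rfl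

lemma pPair_eq_tsum_prod {w : V → ℝ}
    (hw : Summable fun z : V × V => pFlow G p h z.1 z.2 * (w z.2 - w z.1)) :
    pPair G p h w = ∑' z : V × V, pFlow G p h z.1 z.2 * (w z.2 - w z.1) := by
  rw [hw.tsum_prod]
  simp only [pPair, pFlow, ite_mul, zero_mul]

lemma edgeEnergy_nonneg (f : V → ℝ) (z : V × V) : 0 ≤ edgeEnergy G p f z := by
  unfold edgeEnergy
  split_ifs
  exacts [Real.rpow_nonneg (abs_nonneg _) _, le_rfl]

lemma Ip_eq_tsum_edgeEnergy (f : V → ℝ) :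
    Ip G p f = ∑' z : V × V, ENNReal.ofReal (edgeEnergy G p f z) := by
  rw [Ip, ENNReal.tsum_prod']
  simp only [edgeEnergy, apply_ite ENNReal.ofReal, ENNReal.ofReal_zero]

lemma hasSum_edgeEnergy {f : V → ℝ} (hf : Ip G p f ≠ ⊤) :
    HasSum (edgeEnergy G p f) (Ip G p f).toReal := by
  rw [Ip_eq_tsum_edgeEnergy] at hf ⊢
  rw [ENNReal.tsum_toReal_eq fun _ => ENNReal.ofReal_ne_top]
  simpa only [ENNReal.toReal_ofReal (edgeEnergy_nonneg f _)] using ENNReal.hasSum_toReal hf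

lemma abs_pFlow (hpq : p.HolderConjugate q) (x y : V) :
    |pFlow G p h x y| = edgeEnergy G p h (x, y) ^ (1 / q) := by
  unfold pFlow edgeEnergy
  split_ifs
  · have hexp : p - 2 + 1 = p * (1 / q) := by
      rw [mul_one_div, hpq.div_conj_eq_sub_one]
      ring
    rw [abs_mul, abs_of_nonneg (Real.rpow_nonneg (abs_nonneg _) _),
      ← Real.rpow_add_one' (abs_nonneg _) (by linarith [hpq.lt]), hexp,
      Real.rpow_mul (abs_nonneg _)]
  · rw [abs_zero, Real.zero_rpow (one_div_ne_zero hpq.symm.ne_zero)]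

lemma abs_pFlow_mul_sub (hpq : p.HolderConjugate q) (g : V → ℝ) (x y : V) :
    |pFlow G p h x y * (g y - g x)|
      = edgeEnergy G p g (x, y) ^ (1 / p) * edgeEnergy G p h (x, y) ^ (1 / q) := by
  rw [abs_mul, abs_pFlow hpq, mul_comm]
  by_cases hxy : G.Adj x y
  · simp only [edgeEnergy, if_pos hxy, one_div, Real.rpow_rpow_inv (abs_nonneg _) hpq.ne_zero]
  · simp only [edgeEnergy, if_neg hxy, Real.zero_rpow (one_div_ne_zero hpq.symm.ne_zero),
      mul_zero]

lemma summable_and_abs_tsum_pFlow_mul_sub_le (hpq : p.HolderConjugate q) {g : V → ℝ}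
    (hh : Ip G p h ≠ ⊤) (hg : Ip G p g ≠ ⊤) :
    (Summable fun z : V × V => pFlow G p h z.1 z.2 * (g z.2 - g z.1)) ∧
      |∑' z : V × V, pFlow G p h z.1 z.2 * (g z.2 - g z.1)|
        ≤ (Ip G p g).toReal ^ (1 / p) * (Ip G p h).toReal ^ (1 / q) := by
  have rpow_one_div_rpow {r : ℝ} (hr : r ≠ 0) (f : V → ℝ) :
      (fun z => (edgeEnergy G p f z ^ (1 / r)) ^ r) = edgeEnergy G p f :=
    funext fun z => by rw [one_div, Real.rpow_inv_rpow (edgeEnergy_nonneg f z) hr]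
  obtain ⟨hsum, hle⟩ := Real.summable_and_inner_le_Lp_mul_Lq_tsum_of_nonneg hpq
    (f := fun z => edgeEnergy G p g z ^ (1 / p)) (g := fun z => edgeEnergy G p h z ^ (1 / q))
    (fun z => Real.rpow_nonneg (edgeEnergy_nonneg g z) (1 / p))
    (fun z => Real.rpow_nonneg (edgeEnergy_nonneg h z) (1 / q))
    (by rw [rpow_one_div_rpow hpq.ne_zero]; exact (hasSum_edgeEnergy hg).summable)
    (by rw [rpow_one_div_rpow hpq.symm.ne_zero]; exact (hasSum_edgeEnergy hh).summable)
  rw [rpow_one_div_rpow hpq.ne_zero, rpow_one_div_rpow hpq.symm.ne_zero,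
    (hasSum_edgeEnergy hg).tsum_eq, (hasSum_edgeEnergy hh).tsum_eq] at hle
  have habs : (fun z : V × V => |pFlow G p h z.1 z.2 * (g z.2 - g z.1)|)
      = fun z => edgeEnergy G p g z ^ (1 / p) * edgeEnergy G p h z ^ (1 / q) :=
    funext fun z => abs_pFlow_mul_sub hpq g z.1 z.2
  have habs_sum : Summable fun z : V × V => |pFlow G p h z.1 z.2 * (g z.2 - g z.1)| := by
    rw [habs]
    exact hsum
  refine ⟨habs_sum.of_abs, ?_⟩
  calc |∑' z : V × V, pFlow G p h z.1 z.2 * (g z.2 - g z.1)|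
      ≤ ∑' z : V × V, |pFlow G p h z.1 z.2 * (g z.2 - g z.1)| :=
        norm_tsum_le_tsum_norm
          (f := fun z : V × V => pFlow G p h z.1 z.2 * (g z.2 - g z.1)) habs_sum
    _ ≤ _ := by rwa [habs]

lemma hasSum_pFlow_mul_left (hloc : ∀ x, (G.neighborSet x).Finite) (hharm : PHarmonic G p h)
    {u : V → ℝ} (hu : u.support.Finite) :
    HasSum (fun z : V × V => pFlow G p h z.1 z.2 * u z.1) 0 := by
  have hsupp : (Function.support fun z : V × V => pFlow G p h z.1 z.2 * u z.1)
      ⊆ ⋃ x ∈ u.support, {x} ×ˢ G.neighborSet x := by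
    rintro ⟨x, y⟩ hz
    have hxy : G.Adj x y := by
      by_contra hxy
      simp [pFlow, hxy] at hz
    exact Set.mem_biUnion (right_ne_zero_of_mul hz) (by simpa using hxy)
  have hsum : Summable fun z : V × V => pFlow G p h z.1 z.2 * u z.1 :=
    summable_of_hasFiniteSupport
      ((hu.biUnion fun x _ => (Set.finite_singleton x).prod (hloc x)).subset hsupp)
  rw [hsum.hasSum_iff, hsum.tsum_prod]
  simp only [tsum_mul_right, ← pLap_eq_tsum_pFlow, hharm _, zero_mul, tsum_zero]

lemma hasSum_pFlow_mul_sub_of_finite_support (hloc : ∀ x, (G.neighborSet x).Finite)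
    (hharm : PHarmonic G p h) {u : V → ℝ} (hu : u.support.Finite) :
    HasSum (fun z : V × V => pFlow G p h z.1 z.2 * (u z.2 - u z.1)) 0 := by
  have hleft := hasSum_pFlow_mul_left hloc hharm hu
  have hright := (Equiv.prodComm V V).hasSum_iff.mpr hleft
  have hsum := hright.neg.sub hleft
  rw [neg_zero, sub_zero] at hsum
  refine hsum.congr_fun fun z => ?_
  rw [Function.comp_apply, Equiv.prodComm_apply, Prod.fst_swap, Prod.snd_swap, pFlow_swap]
  ring

lemma pPair_eq_tsum_sub_of_finite_support (hloc : ∀ x, (G.neighborSet x).Finite)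
    (hharm : PHarmonic G p h) {f u : V → ℝ} (hu : u.support.Finite)
    (hfu : Summable fun z : V × V => pFlow G p h z.1 z.2 * ((f - u) z.2 - (f - u) z.1)) :
    pPair G p h f = ∑' z : V × V, pFlow G p h z.1 z.2 * ((f - u) z.2 - (f - u) z.1) := by
  have hf := (hfu.hasSum.add (hasSum_pFlow_mul_sub_of_finite_support hloc hharm hu)).congr_fun
    (g := fun z : V × V => pFlow G p h z.1 z.2 * (f z.2 - f z.1))
    fun z => by simp only [Pi.sub_apply]; ring
  rw [add_zero] at hf
  rw [pPair_eq_tsum_prod hf.summable, hf.tsum_eq]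

end

lemma eq_zero_of_forall_abs_le_mul {x C : ℝ} (h : ∀ r, 0 < r → |x| ≤ r * C) : x = 0 := by
  have hlim : Tendsto (fun r : ℝ => r * C) (𝓝[>] 0) (𝓝 (0 * C)) :=
    ((continuous_mul_const C).tendsto 0).mono_left nhdsWithin_le_nhds
  rw [zero_mul] at hlim
  exact abs_nonpos_iff.mp (ge_of_tendsto hlim (eventually_nhdsWithin_of_forall h))

theorem stmt5_general (G : SimpleGraph V) (k : ℕ)
    (hk : BoundedDegree G k) (p : ℝ) (hp : 1 < p) (o : V)
    (h : V → ℝ) (hh : MemBDp G p h) (hharm : PHarmonic G p h)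
    (f : V → ℝ) (hf : BRClos G p o f) :
    pPair G p h f = 0 := by
  have hloc : ∀ x, (G.neighborSet x).Finite := fun x => (hk x).1
  have hpq := Real.HolderConjugate.conjExponent hp
  refine eq_zero_of_forall_abs_le_mul (C := (Ip G p h).toReal ^ (1 / p.conjExponent))
    fun r hr => ?_
  obtain ⟨u, hu, hdist⟩ := hf.2 (r ^ p) (by positivity)
  have hI : Ip G p (f - u) < ENNReal.ofReal (r ^ p) := le_self_add.trans_lt hdist
  obtain ⟨hsum, hle⟩ := summable_and_abs_tsum_pFlow_mul_sub_le hpq hh.2 hI.ne_top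
  rw [pPair_eq_tsum_sub_of_finite_support hloc hharm hu hsum]
  refine hle.trans (mul_le_mul_of_nonneg_right ?_ (by positivity))
  rw [one_div, Real.rpow_inv_le_iff_of_pos ENNReal.toReal_nonneg hr.le (by linarith)]
  exact (ENNReal.toReal_lt_of_lt_ofReal hI).le

theorem stmt5 [Countable V] [Infinite V] (G : SimpleGraph V) (k : ℕ)
    (hG : G.Connected) (hk : BoundedDegree G k) (p : ℝ) (hp : 1 < p) (o : V)
    (h : V → ℝ) (hh : MemBDp G p h) (hharm : PHarmonic G p h)
    (f : V → ℝ) (hf : BRClos G p o f) :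
    pPair G p h f = 0 :=
  stmt5_general G k hk p hp o h hh hharm f hf
end

section
/- Let G be a connected graph of bounded degree and p > 1. The map i : V → Sp(BD_p(G)) defined by (i(x))(f) = f(x) is injective, and the Banach algebra BD_p(G) is semisimple (for every nonzero f ∈ BD_p(G) there is a character τ with τ(f) ≠ 0). -/
open scoped ENNReal Classical

variable {V : Type*}

/-- A character of the commutative Banach algebra `BD_p(G)`: a nonzero multiplicative
linear functional (characters are automatically norm-bounded). -/
structure BDpChar (G : SimpleGraph V) (p : ℝ) where
  toFun : (V → ℝ) → ℝ
  map_add : ∀ f g, MemBDp G p f → MemBDp G p g →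
    toFun (fun x => f x + g x) = toFun f + toFun g
  map_mul : ∀ f g, MemBDp G p f → MemBDp G p g →
    toFun (fun x => f x * g x) = toFun f * toFun g
  map_smul : ∀ (c : ℝ) f, MemBDp G p f → toFun (fun x => c * f x) = c * toFun f
  bound : ∀ f, MemBDp G p f → |toFun f| ≤ BDpNorm G p f
  nonzero : ∃ f, MemBDp G p f ∧ toFun f ≠ 0

/-- `τ` belongs to the `p`-harmonic boundary `∂_p(G)`: it is not evaluation at any vertex,
and it annihilates `B(\overline{ℝG})_{D_p}`. -/
def InPBoundary (G : SimpleGraph V) (p : ℝ) (o : V) (τ : BDpChar G p) : Prop :=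
  (∀ x : V, ∃ f, MemBDp G p f ∧ τ.toFun f ≠ f x) ∧
  (∀ f, BRClos G p o f → τ.toFun f = 0)

/-! Finitely supported functions lie in `BD_p(G)` as soon as every vertex has finitely many
neighbours, so vertex indicators separate the points of `V`. Evaluation at a vertex is a character,
since `|f x| ≤ sup |f| ≤ ‖f‖`; a nonzero `f` is nonzero at some vertex, hence at the corresponding
character. -/

section

variable {G : SimpleGraph V} {p : ℝ}

lemma Ip_const (hp : p ≠ 0) (c : ℝ) : Ip G p (fun _ => c) = 0 := by
  simp [Ip, Real.zero_rpow hp]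

lemma memBDp_const (hp : p ≠ 0) (c : ℝ) : MemBDp G p (fun _ => c) :=
  ⟨⟨|c|, fun _ => le_rfl⟩, by simp [Ip_const hp]⟩

lemma bddFun_of_finite_support {f : V → ℝ} (hf : (Function.support f).Finite) : BddFun f := by
  obtain ⟨M, hM⟩ := ((hf.image fun x => |f x|).insert 0).bddAbove
  refine ⟨M, fun x => hM ?_⟩
  by_cases hx : f x = 0
  · simp [hx]
  · exact Set.mem_insert_of_mem _ ⟨x, hx, rfl⟩

lemma Ip_ne_top_of_finite_support (hp : p ≠ 0) (hloc : ∀ x, (G.neighborSet x).Finite)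
    {f : V → ℝ} (hf : (Function.support f).Finite) : Ip G p f ≠ ⊤ := by
  let F : V × V → ℝ≥0∞ := fun q =>
    if G.Adj q.1 q.2 then ENNReal.ofReal (|f q.2 - f q.1| ^ p) else 0
  -- an edge contributes only if one of its endpoints lies in the support of `f`
  have hsupp : (Function.support F).Finite := by
    refine ((hf.biUnion fun a _ => (Set.finite_singleton a).prod (hloc a)).union
      (hf.biUnion fun b _ => (hloc b).prod (Set.finite_singleton b))).subset ?_
    rintro ⟨a, b⟩ hab
    have hadj : G.Adj a b := by by_contra h; simp [F, h] at hab
    have hne : f a ≠ 0 ∨ f b ≠ 0 := by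
      by_contra! h; simp [F, h.1, h.2, Real.zero_rpow hp] at hab
    rcases hne with ha | hb
    · exact Or.inl (Set.mem_biUnion ha ⟨rfl, hadj⟩)
    · exact Or.inr (Set.mem_biUnion hb ⟨hadj.symm, rfl⟩)
  rw [Ip, ← ENNReal.tsum_prod]
  change ∑' q, F q ≠ ⊤
  rw [tsum_eq_sum (s := hsupp.toFinset) fun q hq => Function.notMem_support.1 (by simpa using hq)]
  refine (ENNReal.sum_lt_top.2 fun q _ => ?_).ne
  simp only [F]
  split_ifs <;> simp

lemma memBDp_of_finite_support (hp : p ≠ 0) (hloc : ∀ x, (G.neighborSet x).Finite)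
    {f : V → ℝ} (hf : (Function.support f).Finite) : MemBDp G p f :=
  ⟨bddFun_of_finite_support hf, Ip_ne_top_of_finite_support hp hloc hf⟩

lemma abs_le_BDpNorm {f : V → ℝ} (hf : BddFun f) (x : V) : |f x| ≤ BDpNorm G p f := by
  obtain ⟨M, hM⟩ := hf
  have hsup : |f x| ≤ ⨆ v, |f v| := le_ciSup ⟨M, by rintro _ ⟨v, rfl⟩; exact hM v⟩ x
  have henergy : 0 ≤ (Ip G p f).toReal ^ (1 / p) := by positivity
  rw [BDpNorm]
  linarith

variable (G) in
noncomputable def BDpChar.eval (hp : p ≠ 0) (x : V) : BDpChar G p where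
  toFun f := f x
  map_add _ _ _ _ := rfl
  map_mul _ _ _ _ := rfl
  map_smul _ _ _ := rfl
  bound _ hf := abs_le_BDpNorm hf.1 x
  nonzero := ⟨fun _ => 1, memBDp_const hp 1, one_ne_zero⟩

lemma exists_memBDp_separating (hp : p ≠ 0) (hloc : ∀ x, (G.neighborSet x).Finite) {x y : V}
    (hxy : x ≠ y) : ∃ f, MemBDp G p f ∧ f x ≠ f y := by
  classical
  exact ⟨Pi.single x 1, memBDp_of_finite_support hp hloc
    ((Set.finite_singleton x).subset Pi.support_single_subset), by simp [hxy.symm]⟩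

end

theorem stmt8_general (G : SimpleGraph V) (k : ℕ)
    (hk : BoundedDegree G k) (p : ℝ) (hp : 1 < p) :
    (∀ x y : V, (∀ f : V → ℝ, MemBDp G p f → f x = f y) → x = y) ∧
    (∀ f : V → ℝ, MemBDp G p f → f ≠ 0 → ∃ τ : BDpChar G p, τ.toFun f ≠ 0) := by
  have hp0 : p ≠ 0 := by positivity
  refine ⟨fun x y hsep => ?_, fun f _ hf => ?_⟩
  · by_contra hxy
    obtain ⟨f, hf, hfxy⟩ := exists_memBDp_separating hp0 (fun v => (hk v).1) hxy
    exact hfxy (hsep f hf)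
  · obtain ⟨x, hx⟩ := Function.ne_iff.1 hf
    exact ⟨BDpChar.eval G hp0 x, hx⟩

theorem stmt8 [Countable V] [Infinite V] (G : SimpleGraph V) (k : ℕ)
    (hG : G.Connected) (hk : BoundedDegree G k) (p : ℝ) (hp : 1 < p) :
    (∀ x y : V, (∀ f : V → ℝ, MemBDp G p f → f x = f y) → x = y) ∧
    (∀ f : V → ℝ, MemBDp G p f → f ≠ 0 → ∃ τ : BDpChar G p, τ.toFun f ≠ 0) :=
  stmt8_general G k hk p hp
end

section
/- Let G be a connected graph of bounded degree, p > 1, φ : V_G → V_H a rough isometry with rough inverse ψ : V_H → V_G satisfying d_G(ψ(φ(x)), x) ≤ a(c+b) for all x. Then for every f ∈ D_p(G), |f(ψ(φ(x))) − f(x)| → 0 as d_G(o, x) → ∞. -/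
open scoped ENNReal Classical

variable {V : Type*}

/-!
Since `I_p(f) < ∞`, only finitely many edges carry an increment `|f y - f x|` above a
given `δ > 0`. Far enough from `o`, a geodesic of length at most `K` meets none of them,
so along it `f` changes by at most `K δ`. As `ψ ∘ φ` moves every vertex by at most
`⌈a (c + b)⌉`, this applies to `x` and `ψ (φ x)`.
-/

open SimpleGraph

namespace SimpleGraph.Walk

theorem abs_sub_le_length_mul {G : SimpleGraph V} {f : V → ℝ} {δ : ℝ} {u v : V}
    (w : G.Walk u v) (hw : ∀ x ∈ w.support, ∀ y, G.Adj x y → |f y - f x| ≤ δ) :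
    |f v - f u| ≤ w.length * δ := by
  induction w with
  | nil => simp
  | @cons u x v hux w ih =>
    have hfirst := hw u (by simp) x hux
    have hrest := ih fun a ha => hw a (by simp [ha])
    calc |f v - f u| ≤ |f v - f x| + |f x - f u| := abs_sub_le _ _ _
      _ ≤ w.length * δ + δ := add_le_add hrest hfirst
      _ = (cons hux w).length * δ := by push_cast [length_cons]; ring

end SimpleGraph.Walk

theorem finite_setOf_adj_lt_abs_sub_of_Ip_ne_top {G : SimpleGraph V} {p : ℝ} {f : V → ℝ}
    (hp : 0 < p) (hf : Ip G p f ≠ ⊤) {δ : ℝ} (hδ : 0 < δ) :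
    {q : V × V | G.Adj q.1 q.2 ∧ δ < |f q.2 - f q.1|}.Finite := by
  set F : V × V → ℝ≥0∞ := fun q =>
    if G.Adj q.1 q.2 then ENNReal.ofReal (|f q.2 - f q.1| ^ p) else 0
  have hF : ∑' q, F q ≠ ⊤ := by
    rwa [show ∑' q, F q = Ip G p f from ENNReal.tsum_prod
      (f := fun x y => if G.Adj x y then ENNReal.ofReal (|f y - f x| ^ p) else 0)]
  have hδp : ENNReal.ofReal (δ ^ p) ≠ 0 := by
    simpa using Real.rpow_pos_of_pos hδ p
  refine (ENNReal.finite_const_le_of_tsum_ne_top hF hδp).subset ?_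
  rintro ⟨x, y⟩ ⟨hxy, hlt⟩
  show ENNReal.ofReal (δ ^ p) ≤ F (x, y)
  simp only [F, hxy, if_true]
  exact ENNReal.ofReal_le_ofReal (Real.rpow_le_rpow hδ.le hlt.le hp.le)

theorem exists_abs_sub_lt_of_dist_le_of_Ip_ne_top {G : SimpleGraph V} {p : ℝ} {f : V → ℝ}
    (hG : G.Connected) (hp : 0 < p) (hf : Ip G p f ≠ ⊤) (o : V) (K : ℕ) {ε : ℝ}
    (hε : 0 < ε) :
    ∃ R : ℕ, ∀ x y, R ≤ G.dist o x → G.dist x y ≤ K → |f y - f x| < ε := by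
  set δ := ε / (K + 1)
  have hδ : 0 < δ := by positivity
  obtain ⟨R₀, hR₀⟩ :=
    ((finite_setOf_adj_lt_abs_sub_of_Ip_ne_top hp hf hδ).image fun q => G.dist o q.1).bddAbove
  refine ⟨R₀ + K + 1, fun x y hx hxy => ?_⟩
  obtain ⟨w, hw⟩ := (hG x y).exists_walk_length_eq_dist
  have hsmall : ∀ a ∈ w.support, ∀ b, G.Adj a b → |f b - f a| ≤ δ := by
    intro a ha b hab
    by_contra! hbad
    have hoa : G.dist o a ≤ R₀ := hR₀ ⟨(a, b), ⟨hab, hbad⟩, rfl⟩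
    have hxa : G.dist x a ≤ K :=
      ((dist_le (w.takeUntil a ha)).trans (w.length_takeUntil_le_length ha)).trans (hw ▸ hxy)
    have hoax : G.dist o x ≤ G.dist o a + G.dist a x := hG.dist_triangle
    rw [dist_comm (u := a)] at hoax
    omega
  calc |f y - f x| ≤ w.length * δ := w.abs_sub_le_length_mul hsmall
    _ ≤ K * δ := by gcongr; exact_mod_cast hw ▸ hxy
    _ < (K + 1) * δ := by gcongr; linarith
    _ = ε := by simp only [δ]; field_simp

theorem stmt18_general {W : Type*}
    (G : SimpleGraph V)
    (hGc : G.Connected)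
    (p : ℝ) (hp : 1 < p) (φ : V → W) (ψ : W → V)
    (a b c : ℝ)
    (hinv : ∀ x : V, (G.dist (ψ (φ x)) x : ℝ) ≤ a * (c + b))
    (o : V) (f : V → ℝ) (hf : Ip G p f ≠ ⊤) :
    ∀ ε : ℝ, 0 < ε → ∃ R : ℕ, ∀ x : V, R ≤ G.dist o x →
      |f (ψ (φ x)) - f x| < ε := by
  intro ε hε
  obtain ⟨R, hR⟩ :=
    exists_abs_sub_lt_of_dist_le_of_Ip_ne_top hGc (by linarith) hf o ⌈a * (c + b)⌉₊ hε
  refine ⟨R, fun x hx => hR x _ hx ?_⟩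
  rw [dist_comm]
  exact_mod_cast (hinv x).trans (Nat.le_ceil _)

theorem stmt18 {W : Type*} [Countable V] [Infinite V] [Countable W] [Infinite W]
    (G : SimpleGraph V) (H : SimpleGraph W) (kG kH : ℕ)
    (hGc : G.Connected) (hHc : H.Connected)
    (hkG : BoundedDegree G kG) (hkH : BoundedDegree H kH)
    (p : ℝ) (hp : 1 < p) (φ : V → W) (ψ : W → V)
    (a b c : ℝ) (ha : 1 ≤ a) (hb : 0 ≤ b) (hc : 0 < c)
    (hlow : ∀ x y : V, (1/a) * (G.dist x y : ℝ) - b ≤ (H.dist (φ x) (φ y) : ℝ))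
    (hup : ∀ x y : V, (H.dist (φ x) (φ y) : ℝ) ≤ a * (G.dist x y : ℝ) + b)
    (hdense : ∀ w : W, ∃ x : V, (H.dist (φ x) w : ℝ) < c)
    (hinv : ∀ x : V, (G.dist (ψ (φ x)) x : ℝ) ≤ a * (c + b))
    (o : V) (f : V → ℝ) (hf : Ip G p f ≠ ⊤) :
    ∀ ε : ℝ, 0 < ε → ∃ R : ℕ, ∀ x : V, R ≤ G.dist o x →
      |f (ψ (φ x)) - f x| < ε :=
  stmt18_general G hGc p hp φ ψ a b c hinv o f hf
end

section
/- Let Γ be a finitely generated infinite group with finite generating set S, and p > 1. Then ℓ^p(Γ) is contained in the closure of Diff(D_p(Γ)/ℝ) in the D(p)-norm, where Diff(E) is the linear span of {f_x − f : f ∈ E, x ∈ Γ} and f_x(g) = f(gx⁻¹). Consequently the closures of Diff(D_p(Γ)/ℝ) and of ℓ^p(Γ) in D_p(Γ)/ℝ coincide. -/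
open scoped ENNReal

variable {Γ : Type*} [Group Γ]

/-- The `p`-Dirichlet sum on a group with finite generating set `S`:
`Σ_{x∈Γ} Σ_{s∈S} |f(xs⁻¹) - f(x)|^p`. -/
noncomputable def IpGrp (S : Finset Γ) (p : ℝ) (f : Γ → ℝ) : ℝ≥0∞ :=
  ∑' x : Γ, ∑ s ∈ S, ENNReal.ofReal (|f (x * s⁻¹) - f x| ^ p)

/-- Membership in `D_p(Γ)`. -/
def MemDp (S : Finset Γ) (p : ℝ) (f : Γ → ℝ) : Prop := IpGrp S p f ≠ ⊤

/-- Membership in `ℓ^p(Γ)`. -/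
def MemLp' (p : ℝ) (f : Γ → ℝ) : Prop :=
  (∑' x : Γ, ENNReal.ofReal (|f x| ^ p)) ≠ ⊤

/-- `Diff(D_p(Γ)/ℝ)`: the linear span of `{f_x − f : f ∈ D_p(Γ), x ∈ Γ}`,
where `f_x(g) = f(gx⁻¹)`. -/
def DiffDp (S : Finset Γ) (p : ℝ) : Set (Γ → ℝ) :=
  ↑(Submodule.span ℝ {g : Γ → ℝ | ∃ f : Γ → ℝ, MemDp S p f ∧
      ∃ x : Γ, g = fun y => f (y * x⁻¹) - f y})

/-- The closure of a set `A` in `D_p(Γ)/ℝ` with respect to the `D(p)`-norm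
`‖[f]‖ = (I_p(f))^{1/p}` (which vanishes on constants). -/
def DClos (S : Finset Γ) (p : ℝ) (A : Set (Γ → ℝ)) : Set (Γ → ℝ) :=
  {f | MemDp S p f ∧ ∀ ε : ℝ, 0 < ε → ∃ g ∈ A,
    IpGrp S p (fun y => f y - g y) < ENNReal.ofReal (ε ^ p)}


/-!
A finitely supported `f ∈ ℓ^p(Γ)` is approximated in `ℓ^p` by `Diff(ℓ^p(Γ))`: as `Γ` is infinite
there are `n` right translates `f(· t⁻¹)` with pairwise disjoint supports, `f - (1/n) Σ_t f(· t⁻¹)`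
lies in `Diff(ℓ^p(Γ))`, and the average has `p`-th power norm `n^{1-p} ‖f‖_p^p → 0` since `p > 1`.
Truncation extends this to all of `ℓ^p(Γ)`, and `I_p(f) ≤ 2^{p+1} |S| ‖f‖_p^p` turns it into an
approximation in the `D(p)`-norm. Conversely, since `S` generates `Γ`, each `f_x - f` with
`f ∈ D_p(Γ)` is a sum of translates of `±(f_s - f)`, `s ∈ S`, so `Diff(D_p(Γ)/ℝ) ⊆ ℓ^p(Γ)`.
-/

open Filter Topology Pointwise

section lpSum

variable {α : Type*} {p : ℝ}

noncomputable def lpSum (p : ℝ) (f : α → ℝ) : ℝ≥0∞ :=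
  ∑' x, ENNReal.ofReal (|f x| ^ p)

lemma rpow_abs_add_le (hp : 0 ≤ p) (a b : ℝ) :
    |a + b| ^ p ≤ 2 ^ p * (|a| ^ p + |b| ^ p) := by
  have hmax : |a + b| ≤ 2 * max |a| |b| :=
    (abs_add_le a b).trans (by linarith [le_max_left |a| |b|, le_max_right |a| |b|])
  calc |a + b| ^ p ≤ (2 * max |a| |b|) ^ p := Real.rpow_le_rpow (abs_nonneg _) hmax hp
    _ = 2 ^ p * max |a| |b| ^ p := Real.mul_rpow zero_le_two (le_max_of_le_left (abs_nonneg a))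
    _ ≤ 2 ^ p * (|a| ^ p + |b| ^ p) := by
      gcongr
      rcases le_total |a| |b| with h | h
      · rw [max_eq_right h]; exact le_add_of_nonneg_left (by positivity)
      · rw [max_eq_left h]; exact le_add_of_nonneg_right (by positivity)

lemma lpSum_add_le (hp : 0 ≤ p) (f g : α → ℝ) :
    lpSum p (f + g) ≤ ENNReal.ofReal (2 ^ p) * (lpSum p f + lpSum p g) := by
  rw [lpSum, lpSum, lpSum, ← ENNReal.tsum_add, ← ENNReal.tsum_mul_left]
  refine ENNReal.tsum_le_tsum fun x => ?_
  rw [← ENNReal.ofReal_add (by positivity) (by positivity), ← ENNReal.ofReal_mul (by positivity)]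
  exact ENNReal.ofReal_le_ofReal (rpow_abs_add_le hp (f x) (g x))

lemma lpSum_neg (f : α → ℝ) : lpSum p (-f) = lpSum p f := by
  simp only [lpSum, Pi.neg_apply, abs_neg]

lemma lpSum_smul (c : ℝ) (f : α → ℝ) :
    lpSum p (c • f) = ENNReal.ofReal (|c| ^ p) * lpSum p f := by
  rw [lpSum, lpSum, ← ENNReal.tsum_mul_left]
  refine tsum_congr fun x => ?_
  rw [Pi.smul_apply, smul_eq_mul, abs_mul, Real.mul_rpow (abs_nonneg _) (abs_nonneg _),
    ENNReal.ofReal_mul (by positivity)]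

lemma lpSum_indicator (hp : p ≠ 0) (s : Set α) (f : α → ℝ) :
    lpSum p (s.indicator f) = ∑' x : s, ENNReal.ofReal (|f x| ^ p) := by
  rw [lpSum, tsum_subtype s fun x => ENNReal.ofReal (|f x| ^ p)]
  refine tsum_congr fun x => ?_
  by_cases hx : x ∈ s <;> simp [hx, Real.zero_rpow hp]

lemma lpSum_indicator_le (hp : p ≠ 0) (s : Set α) (f : α → ℝ) :
    lpSum p (s.indicator f) ≤ lpSum p f := by
  rw [lpSum_indicator hp]
  exact ENNReal.tsum_comp_le_tsum_of_injective Subtype.val_injective _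

lemma exists_finset_lpSum_indicator_compl_lt (hp : p ≠ 0) {f : α → ℝ} (hf : lpSum p f ≠ ⊤)
    {δ : ℝ≥0∞} (hδ : δ ≠ 0) : ∃ F : Finset α, lpSum p ((↑F : Set α)ᶜ.indicator f) < δ := by
  simp only [lpSum_indicator hp]
  exact ((ENNReal.tendsto_tsum_compl_atTop_zero hf).eventually
    (gt_mem_nhds (pos_iff_ne_zero.2 hδ))).exists

lemma abs_sum_rpow_le_of_subsingleton_support (hp : p ≠ 0) {ι : Type*} (s : Finset ι)
    (u : ι → ℝ) (hu : ∀ i ∈ s, ∀ j ∈ s, u i ≠ 0 → u j ≠ 0 → i = j) :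
    |∑ i ∈ s, u i| ^ p ≤ ∑ i ∈ s, |u i| ^ p := by
  by_cases h : ∃ i ∈ s, u i ≠ 0
  · obtain ⟨i, hi, hui⟩ := h
    rw [Finset.sum_eq_single_of_mem i hi fun j hj hji =>
      by_contra fun huj => hji (hu j hj i hi huj hui)]
    exact Finset.single_le_sum (f := fun i => |u i| ^ p) (fun _ _ => by positivity) hi
  · push Not at h
    rw [Finset.sum_eq_zero h, abs_zero, Real.zero_rpow hp]
    exact Finset.sum_nonneg fun _ _ => by positivity

lemma lpSum_sum_le_of_subsingleton_support (hp : p ≠ 0) {ι : Type*} (s : Finset ι)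
    (u : ι → α → ℝ) (hu : ∀ x, ∀ i ∈ s, ∀ j ∈ s, u i x ≠ 0 → u j x ≠ 0 → i = j) :
    lpSum p (∑ i ∈ s, u i) ≤ ∑ i ∈ s, lpSum p (u i) := by
  calc lpSum p (∑ i ∈ s, u i) ≤ ∑' x, ∑ i ∈ s, ENNReal.ofReal (|u i x| ^ p) := by
        refine ENNReal.tsum_le_tsum fun x => ?_
        rw [Finset.sum_apply, ← ENNReal.ofReal_sum_of_nonneg fun _ _ => by positivity]
        exact ENNReal.ofReal_le_ofReal (abs_sum_rpow_le_of_subsingleton_support hp s _ (hu x))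
    _ = ∑ i ∈ s, lpSum p (u i) := Summable.tsum_finsetSum fun _ _ => ENNReal.summable

lemma memLp'_iff_lpSum_ne_top {f : α → ℝ} : MemLp' p f ↔ lpSum p f ≠ ⊤ := Iff.rfl

variable (α) in
def ellpSubmodule (hp : 0 < p) : Submodule ℝ (α → ℝ) where
  carrier := {f | MemLp' p f}
  add_mem' {f g} hf hg := ne_top_of_le_ne_top
    (ENNReal.mul_ne_top ENNReal.ofReal_ne_top (ENNReal.add_ne_top.2 ⟨hf, hg⟩))
    (lpSum_add_le hp.le f g)
  zero_mem' := by
    simp [memLp'_iff_lpSum_ne_top, lpSum, Real.zero_rpow hp.ne']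
  smul_mem' c f hf := by
    show MemLp' p (c • f)
    rw [memLp'_iff_lpSum_ne_top, lpSum_smul]
    exact ENNReal.mul_ne_top ENNReal.ofReal_ne_top hf

lemma mem_ellpSubmodule {hp : 0 < p} {f : α → ℝ} : f ∈ ellpSubmodule α hp ↔ MemLp' p f := Iff.rfl

end lpSum

section Group

variable {p : ℝ}

lemma lpSum_comp_mul_right (f : Γ → ℝ) (a : Γ) : lpSum p (fun y => f (y * a)) = lpSum p f :=
  (Equiv.mulRight a).tsum_eq fun y => ENNReal.ofReal (|f y| ^ p)

lemma comp_mul_right_mem_ellpSubmodule {hp : 0 < p} {f : Γ → ℝ} (hf : f ∈ ellpSubmodule Γ hp)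
    (a : Γ) : (fun y => f (y * a)) ∈ ellpSubmodule Γ hp := by
  rw [mem_ellpSubmodule, memLp'_iff_lpSum_ne_top, lpSum_comp_mul_right]
  exact hf

lemma IpGrp_eq_sum_lpSum (S : Finset Γ) (f : Γ → ℝ) :
    IpGrp S p f = ∑ s ∈ S, lpSum p (fun x => f (x * s⁻¹) - f x) :=
  Summable.tsum_finsetSum fun _ _ => ENNReal.summable

lemma IpGrp_le_lpSum (hp : 0 ≤ p) (S : Finset Γ) (f : Γ → ℝ) :
    IpGrp S p f ≤ 2 * S.card * ENNReal.ofReal (2 ^ p) * lpSum p f := by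
  calc IpGrp S p f ≤ ∑ _s ∈ S, ENNReal.ofReal (2 ^ p) * (lpSum p f + lpSum p f) := by
        rw [IpGrp_eq_sum_lpSum]
        refine Finset.sum_le_sum fun s _ => ?_
        calc lpSum p (fun x => f (x * s⁻¹) - f x) = lpSum p ((fun x => f (x * s⁻¹)) + -f) := by
              rw [← sub_eq_add_neg]; rfl
          _ ≤ _ := lpSum_add_le hp _ _
          _ = _ := by rw [lpSum_comp_mul_right, lpSum_neg]
    _ = 2 * S.card * ENNReal.ofReal (2 ^ p) * lpSum p f := by
        rw [Finset.sum_const, nsmul_eq_mul]; ring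

lemma IpGrp_add_le (hp : 0 ≤ p) (S : Finset Γ) (u v : Γ → ℝ) :
    IpGrp S p (u + v) ≤ ENNReal.ofReal (2 ^ p) * (IpGrp S p u + IpGrp S p v) := by
  simp only [IpGrp_eq_sum_lpSum, ← Finset.sum_add_distrib, Finset.mul_sum]
  refine Finset.sum_le_sum fun s _ => le_of_eq_of_le ?_ (lpSum_add_le hp _ _)
  congr 1
  ext x
  simp only [Pi.add_apply]
  ring

lemma MemLp'.memDp (hp : 0 ≤ p) (S : Finset Γ) {f : Γ → ℝ} (hf : MemLp' p f) : MemDp S p f :=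
  ne_top_of_le_ne_top (ENNReal.mul_ne_top (by finiteness) hf) (IpGrp_le_lpSum hp S f)

lemma memLp'_comp_mul_right_sub {S : Finset Γ} (hS : Subgroup.closure (S : Set Γ) = ⊤)
    (hp : 0 < p) {f : Γ → ℝ} (hf : MemDp S p f) (x : Γ) :
    MemLp' p (fun y => f (y * x⁻¹) - f y) := by
  rw [← mem_ellpSubmodule (hp := hp)]
  induction (hS ▸ Subgroup.mem_top x : x ∈ Subgroup.closure (S : Set Γ))
    using Subgroup.closure_induction with
  | mem s hs =>
    refine ne_top_of_le_ne_top hf ?_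
    rw [IpGrp_eq_sum_lpSum]
    exact Finset.single_le_sum (f := fun s => lpSum p (fun x => f (x * s⁻¹) - f x))
      (fun _ _ => zero_le) hs
  | one =>
    convert (ellpSubmodule Γ hp).zero_mem using 1
    ext y
    simp
  | mul a b _ _ ha hb =>
    -- `f (y (ab)⁻¹) - f y = (f (y b⁻¹ a⁻¹) - f (y b⁻¹)) + (f (y b⁻¹) - f y)`
    convert (ellpSubmodule Γ hp).add_mem (comp_mul_right_mem_ellpSubmodule ha b⁻¹) hb using 1
    ext y
    simp [mul_assoc]
  | inv a _ ha =>
    convert (ellpSubmodule Γ hp).neg_mem (comp_mul_right_mem_ellpSubmodule ha a) using 1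
    ext y
    simp

def diffSpan (P : (Γ → ℝ) → Prop) : Submodule ℝ (Γ → ℝ) :=
  Submodule.span ℝ {g | ∃ f, P f ∧ ∃ x : Γ, g = fun y => f (y * x⁻¹) - f y}

lemma diffSpan_mono {P Q : (Γ → ℝ) → Prop} (h : ∀ f, P f → Q f) : diffSpan P ≤ diffSpan Q :=
  Submodule.span_mono fun _ ⟨f, hf, x, hx⟩ => ⟨f, h f hf, x, hx⟩

lemma DiffDp_subset_setOf_memLp' {S : Finset Γ} (hS : Subgroup.closure (S : Set Γ) = ⊤)
    (hp : 0 < p) : DiffDp S p ⊆ {f | MemLp' p f} := by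
  have hle : diffSpan (MemDp S p) ≤ ellpSubmodule Γ hp := by
    rw [diffSpan, Submodule.span_le]
    rintro _ ⟨f, hf, x, rfl⟩
    exact memLp'_comp_mul_right_sub hS hp hf x
  exact hle

lemma exists_finset_disjoint_translates [Infinite Γ] (F : Finset Γ) (n : ℕ) :
    ∃ T : Finset Γ, T.card = n ∧
      ∀ t ∈ T, ∀ t' ∈ T, ∀ a ∈ F, ∀ b ∈ F, a * t = b * t' → t = t' := by
  classical
  induction n with
  | zero => exact ⟨∅, rfl, by simp⟩
  | succ n ih =>
    obtain ⟨T, hcard, hT⟩ := ih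
    obtain ⟨z, hz⟩ := Infinite.exists_notMem_finset (F⁻¹ * F * T ∪ T)
    rw [Finset.mem_union, not_or] at hz
    have hzT : ∀ t ∈ T, ∀ a ∈ F, ∀ b ∈ F, a * z ≠ b * t := fun t ht a ha b hb h => hz.1 <| by
      rw [show z = a⁻¹ * b * t by rw [mul_assoc, ← h, inv_mul_cancel_left]]
      exact Finset.mul_mem_mul (Finset.mul_mem_mul (Finset.inv_mem_inv ha) hb) ht
    refine ⟨insert z T, by rw [Finset.card_insert_of_notMem hz.2, hcard], ?_⟩
    intro t hmem t' hmem' a ha b hb h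
    rcases Finset.mem_insert.1 hmem with rfl | ht <;>
      rcases Finset.mem_insert.1 hmem' with rfl | ht'
    · rfl
    · exact absurd h (hzT t' ht' a ha b hb)
    · exact absurd h.symm (hzT t ht b hb a ha)
    · exact hT t ht t' ht' a ha b hb h

lemma exists_nat_mul_ofReal_inv_rpow_mul_lt (hp : 1 < p) {L δ : ℝ≥0∞} (hL : L ≠ ⊤)
    (hδ : δ ≠ 0) : ∃ n : ℕ, 0 < n ∧ n * ENNReal.ofReal ((n : ℝ)⁻¹ ^ p) * L < δ := by
  have hlim : Tendsto (fun n : ℕ => ENNReal.ofReal ((n : ℝ) ^ (-(p - 1))) * L) atTop (𝓝 0) := by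
    have := (tendsto_rpow_neg_atTop (by linarith : 0 < p - 1)).comp tendsto_natCast_atTop_atTop
    simpa using ENNReal.Tendsto.mul_const (ENNReal.tendsto_ofReal this) (Or.inr hL)
  obtain ⟨n, hn, hpos⟩ :=
    ((hlim.eventually (gt_mem_nhds (pos_iff_ne_zero.2 hδ))).and (eventually_gt_atTop 0)).exists
  refine ⟨n, hpos, lt_of_eq_of_lt ?_ hn⟩
  have hn0 : (0 : ℝ) < n := Nat.cast_pos.2 hpos
  rw [← ENNReal.ofReal_natCast, ← ENNReal.ofReal_mul hn0.le, Real.inv_rpow hn0.le,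
    ← Real.rpow_neg hn0.le, neg_sub, sub_eq_add_neg, Real.rpow_add hn0, Real.rpow_one]

lemma exists_mem_diffSpan_lpSum_sub_lt_of_support_subset [Infinite Γ] (hp : 1 < p)
    {F : Finset Γ} {f : Γ → ℝ} (hf : MemLp' p f) (hF : ∀ y, f y ≠ 0 → y ∈ F)
    {δ : ℝ≥0∞} (hδ : δ ≠ 0) : ∃ h ∈ diffSpan (MemLp' p), lpSum p (f - h) < δ := by
  obtain ⟨n, hn, hlt⟩ := exists_nat_mul_ofReal_inv_rpow_mul_lt hp hf hδ
  obtain ⟨T, hcard, hT⟩ := exists_finset_disjoint_translates F n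
  -- `f - h` is the average of the translates of `f` by `T`, which have disjoint supports
  refine ⟨∑ t ∈ T, (-(n : ℝ)⁻¹) • fun y => f (y * t⁻¹) - f y,
    Submodule.sum_mem _ fun t _ => Submodule.smul_mem _ _ (Submodule.subset_span ⟨f, hf, t, rfl⟩),
    ?_⟩
  have hn0 : (n : ℝ) ≠ 0 := Nat.cast_ne_zero.2 hn.ne'
  have havg : f - ∑ t ∈ T, (-(n : ℝ)⁻¹) • (fun y => f (y * t⁻¹) - f y)
      = ∑ t ∈ T, (n : ℝ)⁻¹ • fun y => f (y * t⁻¹) := by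
    ext y
    simp only [Pi.sub_apply, Finset.sum_apply, Pi.smul_apply, smul_eq_mul, Finset.sum_sub_distrib,
      mul_sub, neg_mul, Finset.sum_neg_distrib, Finset.sum_const, hcard, nsmul_eq_mul,
      ← mul_assoc, mul_inv_cancel₀ hn0, one_mul]
    ring
  have hdisj : ∀ y, ∀ t ∈ T, ∀ t' ∈ T, ((n : ℝ)⁻¹ • fun y => f (y * t⁻¹)) y ≠ 0 →
      ((n : ℝ)⁻¹ • fun y => f (y * t'⁻¹)) y ≠ 0 → t = t' := fun y t ht t' ht' h h' =>
    hT t ht t' ht' _ (hF _ (right_ne_zero_of_mul h)) _ (hF _ (right_ne_zero_of_mul h'))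
      (by group)
  calc lpSum p (f - _) ≤ ∑ t ∈ T, lpSum p ((n : ℝ)⁻¹ • fun y => f (y * t⁻¹)) :=
        havg ▸ lpSum_sum_le_of_subsingleton_support (by linarith) T _ hdisj
    _ = n * ENNReal.ofReal ((n : ℝ)⁻¹ ^ p) * lpSum p f := by
        simp only [lpSum_smul, lpSum_comp_mul_right, Finset.sum_const, hcard, nsmul_eq_mul,
          abs_inv, Nat.abs_cast, mul_assoc]
    _ < δ := hlt

lemma exists_mem_diffSpan_lpSum_sub_lt [Infinite Γ] (hp : 1 < p) {f : Γ → ℝ} (hf : MemLp' p f)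
    {δ : ℝ≥0∞} (hδ : δ ≠ 0) : ∃ h ∈ diffSpan (MemLp' p), lpSum p (f - h) < δ := by
  have hp0 : 0 < p := by linarith
  obtain ⟨η, hη, hηδ⟩ := ENNReal.exists_pos_mul_lt (b := δ)
    (by finiteness : ENNReal.ofReal (2 ^ p) * 2 ≠ ⊤) hδ
  obtain ⟨F, hF⟩ := exists_finset_lpSum_indicator_compl_lt hp0.ne' hf hη.ne'
  have hfF : MemLp' p ((F : Set Γ).indicator f) :=
    ne_top_of_le_ne_top hf (lpSum_indicator_le hp0.ne' _ f)
  obtain ⟨h, hh, hlt⟩ := exists_mem_diffSpan_lpSum_sub_lt_of_support_subset hp hfF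
    (fun y hy => by_contra fun hyF => hy (Set.indicator_of_notMem hyF f)) hη.ne'
  refine ⟨h, hh, ?_⟩
  calc lpSum p (f - h) = lpSum p ((F : Set Γ)ᶜ.indicator f + ((F : Set Γ).indicator f - h)) := by
        rw [Set.indicator_compl, sub_add_sub_cancel]
    _ ≤ ENNReal.ofReal (2 ^ p) * (η + η) :=
        (lpSum_add_le hp0.le _ _).trans (by gcongr)
    _ = η * (ENNReal.ofReal (2 ^ p) * 2) := by ring
    _ < δ := hηδ

lemma exists_mem_DiffDp_IpGrp_sub_lt [Infinite Γ] (S : Finset Γ) (hp : 1 < p) {f : Γ → ℝ}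
    (hf : MemLp' p f) {δ : ℝ≥0∞} (hδ : δ ≠ 0) : ∃ h ∈ DiffDp S p, IpGrp S p (f - h) < δ := by
  have hp0 : 0 < p := by linarith
  obtain ⟨η, hη, hηδ⟩ := ENNReal.exists_pos_mul_lt (b := δ)
    (by finiteness : 2 * S.card * ENNReal.ofReal (2 ^ p) ≠ ⊤) hδ
  obtain ⟨h, hh, hlt⟩ := exists_mem_diffSpan_lpSum_sub_lt hp hf hη.ne'
  refine ⟨h, diffSpan_mono (fun g hg => hg.memDp hp0.le S) hh, ?_⟩
  calc IpGrp S p (f - h) ≤ 2 * S.card * ENNReal.ofReal (2 ^ p) * lpSum p (f - h) :=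
        IpGrp_le_lpSum hp0.le S _
    _ ≤ 2 * S.card * ENNReal.ofReal (2 ^ p) * η := by gcongr
    _ < δ := by rwa [mul_comm]

lemma mem_DClos_iff (hp : 0 < p) {S : Finset Γ} {A : Set (Γ → ℝ)} {f : Γ → ℝ} :
    f ∈ DClos S p A ↔ MemDp S p f ∧ ∀ δ : ℝ≥0∞, δ ≠ 0 → ∃ g ∈ A, IpGrp S p (f - g) < δ := by
  refine and_congr_right fun _ => ⟨fun h δ hδ => ?_, fun h ε hε => ?_⟩
  · obtain ⟨ε, hε, hεδ⟩ : ∃ ε > 0, ENNReal.ofReal (ε ^ p) ≤ δ := by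
      by_cases hδtop : δ = ⊤
      · exact ⟨1, one_pos, hδtop ▸ le_top⟩
      · refine ⟨δ.toReal ^ p⁻¹, Real.rpow_pos_of_pos (ENNReal.toReal_pos hδ hδtop) _, ?_⟩
        rw [← Real.rpow_mul ENNReal.toReal_nonneg, inv_mul_cancel₀ hp.ne', Real.rpow_one,
          ENNReal.ofReal_toReal hδtop]
    obtain ⟨g, hg, hlt⟩ := h ε hε
    exact ⟨g, hg, hlt.trans_le hεδ⟩
  · exact h _ (ENNReal.ofReal_pos.2 (Real.rpow_pos_of_pos hε p)).ne'

lemma DClos_mono {S : Finset Γ} {A B : Set (Γ → ℝ)} (h : A ⊆ B) : DClos S p A ⊆ DClos S p B :=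
  fun _ hf => ⟨hf.1, fun ε hε => (hf.2 ε hε).imp fun _ hg => ⟨h hg.1, hg.2⟩⟩

lemma DClos_subset_DClos_of_subset (hp : 0 < p) {S : Finset Γ} {A B : Set (Γ → ℝ)}
    (h : A ⊆ DClos S p B) : DClos S p A ⊆ DClos S p B := by
  intro f hf
  rw [mem_DClos_iff hp] at hf ⊢
  refine ⟨hf.1, fun δ hδ => ?_⟩
  obtain ⟨η, hη, hηδ⟩ := ENNReal.exists_pos_mul_lt (b := δ)
    (by finiteness : ENNReal.ofReal (2 ^ p) * 2 ≠ ⊤) hδ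
  obtain ⟨g, hgA, hfg⟩ := hf.2 η hη.ne'
  obtain ⟨g', hg'B, hgg'⟩ := ((mem_DClos_iff hp).1 (h hgA)).2 η hη.ne'
  refine ⟨g', hg'B, ?_⟩
  calc IpGrp S p (f - g') = IpGrp S p ((f - g) + (g - g')) := by rw [sub_add_sub_cancel]
    _ ≤ ENNReal.ofReal (2 ^ p) * (η + η) :=
        (IpGrp_add_le hp.le S _ _).trans (by gcongr)
    _ = η * (ENNReal.ofReal (2 ^ p) * 2) := by ring
    _ < δ := hηδ

end Group

theorem stmt19 [Infinite Γ] (S : Finset Γ)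
    (hS : Subgroup.closure (S : Set Γ) = ⊤) (p : ℝ) (hp : 1 < p) :
    (∀ f : Γ → ℝ, MemLp' p f → f ∈ DClos S p (DiffDp S p)) ∧
    DClos S p (DiffDp S p) = DClos S p {f : Γ → ℝ | MemLp' p f} := by
  have hp0 : 0 < p := by linarith
  have hLp : ∀ f : Γ → ℝ, MemLp' p f → f ∈ DClos S p (DiffDp S p) := fun f hf =>
    (mem_DClos_iff hp0).2 ⟨hf.memDp hp0.le S, fun _ hδ => exists_mem_DiffDp_IpGrp_sub_lt S hp hf hδ⟩
  exact ⟨hLp, (DClos_mono (DiffDp_subset_setOf_memLp' hS hp0)).antisymm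
    (DClos_subset_DClos_of_subset hp0 hLp)⟩
end
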